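/- arXiv:2503.14664 — 6 statements merged into one kernel-verified Lean document; each statement's English description precedes it below -/
import Mathlib

section
/- Let Λ be a non-ordinary numerical semigroup with conductor c = c(Λ) and jump u = u(Λ). If σ is a right generator of Λ with σ ≥ c + u, then σ is not a strong generator of Λ. -/
/-!
Write `m` for the multiplicity and `u` for the jump, so that `m + u` is the second positive
element of `Λ`. Then `σ + m = (σ - u) + (m + u)`. Since `σ - u ≥ c`, the first summand lies in
`Λ`; since `Λ` is non-ordinary, `m < c`, so `m + u < σ`. Both summands are therefore positive
elements of `Λ ∖ {σ}`, and `σ + m` is not a minimal generator of it.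
-/

open Pointwise

namespace NumSgpPaper

/-- `S` is a numerical semigroup: an additive submonoid of ℕ with finite complement. -/
structure IsNumSgp (S : Set ℕ) : Prop where
  zero_mem : 0 ∈ S
  add_mem : ∀ ⦃a b : ℕ⦄, a ∈ S → b ∈ S → a + b ∈ S
  cofinite : Sᶜ.Finite

/-- The Frobenius number: the largest gap of `S` (junk value `0` if there are no gaps). -/
noncomputable def frob (S : Set ℕ) : ℕ := sSup Sᶜ

open Classical in
/-- The conductor: one plus the largest gap, and `0` if there are no gaps (so `c(ℕ) = 0`). -/
noncomputable def conductor (S : Set ℕ) : ℕ := if Sᶜ = ∅ then 0 else frob S + 1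

/-- The genus: the number of gaps. -/
noncomputable def genus (S : Set ℕ) : ℕ := Sᶜ.ncard

/-- The multiplicity: the smallest positive element. -/
noncomputable def mult (S : Set ℕ) : ℕ := sInf {n : ℕ | n ∈ S ∧ 0 < n}

/-- The jump: the difference between the second and first positive elements. -/
noncomputable def jump (S : Set ℕ) : ℕ := sInf {n : ℕ | n ∈ S ∧ mult S < n} - mult S

/-- A minimal generator: a positive element of `S` that is not the sum of
two positive elements of `S`. -/
def IsMinGen (S : Set ℕ) (x : ℕ) : Prop :=
  0 < x ∧ x ∈ S ∧ ¬ ∃ a b : ℕ, 0 < a ∧ 0 < b ∧ a ∈ S ∧ b ∈ S ∧ a + b = x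

/-- A right generator: a minimal generator larger than the Frobenius number. -/
def IsRightGen (S : Set ℕ) (x : ℕ) : Prop := IsMinGen S x ∧ frob S < x

/-- A strong generator: a right generator `σ` such that `σ + m(S)` is a minimal
generator of `S \ {σ}`. -/
def IsStrongGen (S : Set ℕ) (σ : ℕ) : Prop :=
  IsRightGen S σ ∧ IsMinGen (S \ {σ}) (σ + mult S)

/-- `S` is ordinary when its gaps are exactly `{1, …, g(S)}`. -/
def IsOrdinary (S : Set ℕ) : Prop := Sᶜ = Set.Icc 1 (genus S)

/-- The left elements: the elements of `S` smaller than the Frobenius number. -/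
def leftEls (S : Set ℕ) : Set ℕ := {x : ℕ | x ∈ S ∧ x < frob S}

/-- The gcd of a set of natural numbers. -/
noncomputable def setGcd (A : Set ℕ) : ℕ :=
  sInf {d : ℕ | (∀ a ∈ A, d ∣ a) ∧ ∀ e : ℕ, (∀ a ∈ A, e ∣ a) → e ∣ d}

/-- `ω(S)`: the gcd of the left elements of `S`. -/
noncomputable def omega' (S : Set ℕ) : ℕ := setGcd (leftEls S)

/-- The shrinking of `S`: the additive submonoid of ℕ generated by the left
elements divided by their gcd. -/
noncomputable def shrink (S : Set ℕ) : Set ℕ :=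
  (AddSubmonoid.closure ((fun x => x / omega' S) '' leftEls S) : AddSubmonoid ℕ)

/-- `T` is a descendant of `S`: a numerical semigroup contained in `S` all of whose
missing elements lie beyond the Frobenius number of `S`. -/
def IsDescendant (S T : Set ℕ) : Prop :=
  IsNumSgp T ∧ T ⊆ S ∧ ∀ x ∈ S \ T, frob S < x

/-- The pseudo-ordinary semigroup `P_{m,u} = {0, m} ∪ {n : n ≥ m + u}`. -/
def P (m u : ℕ) : Set ℕ := {0, m} ∪ {n : ℕ | m + u ≤ n}

/-- The submonoid of ℕ generated by the interval `{a, …, b}`. -/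
def intervalSgp (a b : ℕ) : Set ℕ := (AddSubmonoid.closure (Set.Icc a b) : AddSubmonoid ℕ)

section

variable {S : Set ℕ}

theorem mem_of_frob_lt (hS : Sᶜ.Finite) {n : ℕ} (hn : frob S < n) : n ∈ S := by
  by_contra hn'
  exact hn.not_ge (le_csSup hS.bddAbove hn')

theorem frob_notMem (hS : Sᶜ.Finite) (hne : Sᶜ.Nonempty) : frob S ∉ S :=
  Nat.sSup_mem hne hS.bddAbove

theorem conductor_eq_frob_add_one (hne : Sᶜ.Nonempty) : conductor S = frob S + 1 :=
  if_neg hne.ne_empty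

theorem mult_add_jump_mem_and_jump_pos (hS : Sᶜ.Finite) :
    mult S + jump S ∈ S ∧ 0 < jump S := by
  have hsecond : sInf {n | n ∈ S ∧ mult S < n} ∈ S ∧ mult S < sInf {n | n ∈ S ∧ mult S < n} :=
    Nat.sInf_mem (s := {n | n ∈ S ∧ mult S < n})
      ⟨frob S + mult S + 1, mem_of_frob_lt hS (by omega), by omega⟩
  rw [jump, Nat.add_sub_cancel' hsecond.2.le]
  exact ⟨hsecond.1, Nat.sub_pos_of_lt hsecond.2⟩

theorem isOrdinary_of_compl_eq_Icc {n : ℕ} (hS : Sᶜ = Set.Icc 1 n) : IsOrdinary S := by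
  have hgenus : genus S = n := by
    rw [genus, hS, ← Finset.coe_Icc, Set.ncard_coe_finset, Nat.card_Icc, Nat.add_sub_cancel]
  rw [IsOrdinary, hgenus, hS]

theorem compl_nonempty_of_not_isOrdinary (hord : ¬ IsOrdinary S) : Sᶜ.Nonempty := by
  refine Set.nonempty_iff_ne_empty.mpr fun hempty => hord (isOrdinary_of_compl_eq_Icc (n := 0) ?_)
  simp [hempty]

theorem IsNumSgp.mult_lt_frob (hS : IsNumSgp S) (hord : ¬ IsOrdinary S) : mult S < frob S := by
  by_contra! hle
  refine hord (isOrdinary_of_compl_eq_Icc (n := frob S) (Set.ext fun k => ⟨fun hk => ?_, ?_⟩))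
  · refine ⟨Nat.pos_of_ne_zero ?_, le_csSup hS.cofinite.bddAbove hk⟩
    rintro rfl
    exact hk hS.zero_mem
  · rintro ⟨hk1, hkF⟩ hk
    have hmk : mult S ≤ k := Nat.sInf_le ⟨hk, hk1⟩
    obtain rfl : k = frob S := by omega
    exact frob_notMem hS.cofinite (compl_nonempty_of_not_isOrdinary hord) hk

end

theorem stmt2_general (Λ : Set ℕ) (h : IsNumSgp Λ) (hord : ¬ IsOrdinary Λ)
    (σ : ℕ) (hge : conductor Λ + jump Λ ≤ σ) :
    ¬ IsStrongGen Λ σ := by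
  rintro ⟨-, -, -, hσm_minimal⟩
  rw [conductor_eq_frob_add_one (compl_nonempty_of_not_isOrdinary hord)] at hge
  have hmF := h.mult_lt_frob hord
  obtain ⟨hsecond, hu⟩ := mult_add_jump_mem_and_jump_pos h.cofinite
  refine hσm_minimal ⟨σ - jump Λ, mult Λ + jump Λ, by omega, by omega,
    ⟨mem_of_frob_lt h.cofinite (by omega), ?_⟩, ⟨hsecond, ?_⟩, by omega⟩ <;>
  · rw [Set.mem_singleton_iff]
    omega

/-- In a non-ordinary numerical semigroup, a right generator `σ ≥ c + u` is not strong. -/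
theorem stmt2 (Λ : Set ℕ) (h : IsNumSgp Λ) (hord : ¬ IsOrdinary Λ)
    (σ : ℕ) (hσ : IsRightGen Λ σ) (hge : conductor Λ + jump Λ ≤ σ) :
    ¬ IsStrongGen Λ σ :=
  stmt2_general Λ h hord σ hge

end NumSgpPaper
end

section
/- Let Λ be a non-ordinary numerical semigroup. Then Λ = ω(Λ)·shrink(Λ) ∪ {n ∈ ℕ : n ≥ c(Λ)}, where ω·S = {ω·s : s ∈ S}. -/
open Pointwise

namespace NumSgpPaper

/-! Below the Frobenius number the elements of `Λ` are its left elements, so `Λ` consists of its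
left elements and the numbers from the conductor on. Since `ω(Λ)` divides every left element,
multiplication by `ω(Λ)` maps `shrink Λ` onto the submonoid generated by the left elements, which
lies in `Λ` and contains them. -/

namespace IsNumSgp

variable {S : Set ℕ}

def toAddSubmonoid (h : IsNumSgp S) : AddSubmonoid ℕ where
  carrier := S
  zero_mem' := h.zero_mem
  add_mem' := fun ha hb => h.add_mem ha hb

theorem mem_of_frob_lt (h : IsNumSgp S) {n : ℕ} (hn : frob S < n) : n ∈ S := by
  by_contra hnS
  exact hn.not_ge (le_csSup h.cofinite.bddAbove hnS)

theorem frob_notMem (h : IsNumSgp S) (hgap : Sᶜ.Nonempty) : frob S ∉ S :=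
  Nat.sSup_mem hgap h.cofinite.bddAbove

theorem eq_leftEls_union_conductor_le (h : IsNumSgp S) :
    S = leftEls S ∪ {n : ℕ | conductor S ≤ n} := by
  rcases Set.eq_empty_or_nonempty Sᶜ with hgap | hgap
  · simp [conductor, Set.compl_empty_iff.mp hgap]
  have hcond : conductor S = frob S + 1 := if_neg hgap.ne_empty
  ext n
  simp only [leftEls, hcond, Set.mem_union, Set.mem_ofPred_eq, Nat.succ_le_iff]
  constructor
  · intro hn
    rcases lt_trichotomy n (frob S) with hlt | rfl | hgt
    · exact .inl ⟨hn, hlt⟩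
    · exact absurd hn (h.frob_notMem hgap)
    · exact .inr hgt
  · rintro (hn | hn)
    exacts [hn.1, h.mem_of_frob_lt hn]

end IsNumSgp

theorem setGcd_dvd_of_finite {A : Set ℕ} (hA : A.Finite) {a : ℕ} (ha : a ∈ A) : setGcd A ∣ a := by
  have hgcd : hA.toFinset.gcd id ∈
      {d : ℕ | (∀ a ∈ A, d ∣ a) ∧ ∀ e : ℕ, (∀ a ∈ A, e ∣ a) → e ∣ d} :=
    ⟨fun a ha => Finset.gcd_dvd (hA.mem_toFinset.2 ha),
      fun e he => Finset.dvd_gcd fun b hb => he b (hA.mem_toFinset.1 hb)⟩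
  exact (Nat.sInf_mem ⟨_, hgcd⟩).1 a ha

theorem image_mul_closure_image_div {A : Set ℕ} {d : ℕ} (hd : ∀ a ∈ A, d ∣ a) :
    (fun x => d * x) '' (AddSubmonoid.closure ((fun x => x / d) '' A) : Set ℕ) =
      AddSubmonoid.closure A := by
  have hA : (fun x => d * x) '' ((fun x => x / d) '' A) = A :=
    Set.LeftInvOn.image_image fun a ha => Nat.mul_div_cancel' (hd a ha)
  calc (fun x => d * x) '' (AddSubmonoid.closure ((fun x => x / d) '' A) : Set ℕ)
      = (AddSubmonoid.closure ((fun x => x / d) '' A)).map (AddMonoidHom.mulLeft d) := rfl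
    _ = AddSubmonoid.closure A := by
      rw [AddMonoidHom.map_mclosure]
      exact congrArg (fun s => (AddSubmonoid.closure s : Set ℕ)) hA

theorem image_omega'_mul_shrink (S : Set ℕ) :
    (fun x => omega' S * x) '' shrink S = AddSubmonoid.closure (leftEls S) := by
  have hfin : (leftEls S).Finite := (Set.finite_Iio (frob S)).subset fun _ hx => hx.2
  exact image_mul_closure_image_div fun _ ha => setGcd_dvd_of_finite hfin ha

theorem stmt4_general (Λ : Set ℕ) (h : IsNumSgp Λ) :
    Λ = (fun x => omega' Λ * x) '' shrink Λ ∪ {n : ℕ | conductor Λ ≤ n} := by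
  have hΛ := h.eq_leftEls_union_conductor_le
  have hclosure : (AddSubmonoid.closure (leftEls Λ) : Set ℕ) ⊆ Λ :=
    AddSubmonoid.closure_le (S := h.toAddSubmonoid).2 fun _ hx => hx.1
  rw [image_omega'_mul_shrink]
  refine le_antisymm ?_ ?_
  · exact hΛ.le.trans (Set.union_subset_union_left _ AddSubmonoid.subset_closure)
  · exact Set.union_subset hclosure (Set.subset_union_right.trans hΛ.ge)

/-- A non-ordinary numerical semigroup satisfies
`Λ = ω(Λ)·shrink(Λ) ∪ {n : n ≥ c(Λ)}`. -/
theorem stmt4 (Λ : Set ℕ) (h : IsNumSgp Λ) (hord : ¬ IsOrdinary Λ) :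
    Λ = (fun x => omega' Λ * x) '' shrink Λ ∪ {n : ℕ | conductor Λ ≤ n} :=
  stmt4_general Λ h

end NumSgpPaper
end

section
/- Let i, j be integers with 2 ≤ i < j. Then the conductor of the numerical semigroup Λ_{{i,…,j}} generated by the interval {i, i+1, …, j} equals i·⌊(j−2)/(j−i)⌋. -/
/-!
An integer `n` lies in `Λ_{i,…,j}` iff `k i ≤ n ≤ k j` for some `k`. The intervals `[k i, k j]` and
`[(k+1) i, (k+1) j]` touch exactly when `k (j - i) ≥ i - 1`, and then so do all later ones. With
`q = ⌈(i-1)/(j-i)⌉ = ⌊(j-2)/(j-i)⌋` everything from `q i` on is covered, while `q i - 1` falls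
strictly between `(q-1) j` and `q i`; hence the conductor is `q i`.
-/

open Pointwise

namespace NumSgpPaper

theorem conductor_eq_of_isGreatest_compl {S : Set ℕ} {f : ℕ} (hf : IsGreatest Sᶜ f) :
    conductor S = f + 1 := by
  rw [conductor, if_neg (Set.nonempty_iff_ne_empty.1 ⟨f, hf.1⟩), frob, hf.csSup_eq]

theorem mem_intervalSgp_iff {i j n : ℕ} (hij : i ≤ j) :
    n ∈ intervalSgp i j ↔ ∃ k, k * i ≤ n ∧ n ≤ k * j := by
  constructor
  · intro hn
    induction hn using AddSubmonoid.closure_induction with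
    | mem x hx => exact ⟨1, by simpa using hx⟩
    | zero => exact ⟨0, by simp⟩
    | add a b _ _ iha ihb =>
      obtain ⟨k, hka, hak⟩ := iha
      obtain ⟨l, hlb, hbl⟩ := ihb
      exact ⟨k + l, by rw [add_mul]; omega, by rw [add_mul]; omega⟩
  · rintro ⟨k, hkn, hnk⟩
    induction k generalizing n with
    | zero => simp_all [intervalSgp]
    | succ k ih =>
      rw [add_one_mul] at hkn hnk
      -- peel off the summand `min j (n - k * i) ∈ [i, j]`
      have hx : min j (n - k * i) ∈ Set.Icc i j := Set.mem_Icc.2 ⟨by omega, min_le_left _ _⟩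
      have hrest : n - min j (n - k * i) ∈ intervalSgp i j :=
        ih (by omega) (by have := Nat.mul_le_mul_left k hij; omega)
      rw [← Nat.sub_add_cancel (min_le_right j (n - k * i) |>.trans (Nat.sub_le n _))]
      exact add_mem hrest (AddSubmonoid.subset_closure hx)

theorem not_mem_intervalSgp_of_lt_of_lt {i j n k : ℕ} (hij : i ≤ j) (hkn : k * j < n)
    (hnk : n < (k + 1) * i) : n ∉ intervalSgp i j := by
  intro hn
  obtain ⟨m, hmn, hnm⟩ := (mem_intervalSgp_iff hij).1 hn
  have hmk : m ≤ k := Nat.lt_succ_iff.1 (Nat.lt_of_mul_lt_mul_right (hmn.trans_lt hnk))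
  exact absurd (hnm.trans (Nat.mul_le_mul_right j hmk)) hkn.not_ge

theorem mem_intervalSgp_of_succ_mul_le {i j n k : ℕ} (hi : 0 < i) (hij : i ≤ j)
    (hk : (k + 1) * i ≤ k * j + 1) (hkn : k * i ≤ n) : n ∈ intervalSgp i j := by
  have hkm : k ≤ n / i := (Nat.le_div_iff_mul_le hi).2 hkn
  have hm : (n / i + 1) * i ≤ n / i * j + 1 := by
    obtain ⟨l, hl⟩ := Nat.exists_eq_add_of_le hkm
    rw [hl]
    nlinarith
  refine (mem_intervalSgp_iff hij).2 ⟨n / i, Nat.div_mul_le_self n i, ?_⟩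
  have := Nat.lt_div_mul_add (a := n) hi
  linarith

/-- The conductor of the semigroup generated by the interval `{i, …, j}`
is `i·⌊(j-2)/(j-i)⌋`. -/
theorem stmt8 (i j : ℕ) (h2 : 2 ≤ i) (hij : i < j) :
    conductor (intervalSgp i j) = i * ((j - 2) / (j - i)) := by
  obtain ⟨d, rfl⟩ : ∃ d, j = i + d := ⟨j - i, by omega⟩
  have hd : 0 < d := by omega
  rw [Nat.add_sub_cancel_left]
  obtain ⟨p, hp⟩ : ∃ p, (i + d - 2) / d = p + 1 :=
    Nat.exists_eq_add_one.2 (Nat.div_pos (by omega) hd)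
  have hp_le : (p + 1) * d ≤ i + d - 2 := hp ▸ Nat.div_mul_le_self _ _
  have hp_gt : i + d - 2 < (p + 1) * d + d := hp ▸ Nat.lt_div_mul_add hd
  rw [add_one_mul] at hp_le hp_gt
  have hgap : p * d + 2 ≤ i := by omega
  have htouch : i ≤ p * d + d + 1 := by omega
  obtain ⟨f, hf⟩ : ∃ f, i * (p + 1) = f + 1 := Nat.exists_eq_add_one.2 (by positivity)
  rw [hp, hf]
  refine conductor_eq_of_isGreatest_compl ⟨?_, fun n hn => not_lt.1 fun hfn => hn ?_⟩
  · exact not_mem_intervalSgp_of_lt_of_lt (k := p) (by omega) (by nlinarith) (by nlinarith)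
  · exact mem_intervalSgp_of_succ_mul_le (k := p + 1) (by omega) (by omega) (by nlinarith)
      (by nlinarith)

end NumSgpPaper
end

section
/- Let Λ be a numerical semigroup with conductor c = c(Λ) whose right generators are σ₁ < … < σ_r, let 2 ≤ i ≤ r, and suppose σ_{i−1} ≠ c. Set Λ̃ = Λ ∖ {σ_i} and Λ̃′ = Λ ∖ {σ_{i−1}}. If ω(Λ̃′) = 1, then ω(Λ̃) = 1, shrink(Λ̃) = shrink(Λ̃′) + Λ_{{σ_{i−1},…,σ_i−1}}, and c(shrink(Λ̃)) ≤ c(shrink(Λ̃′)). -/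
open Pointwise

namespace NumSgpPaper

lemma coe_sup_eq (S T : AddSubmonoid ℕ) : ((S ⊔ T : AddSubmonoid ℕ) : Set ℕ) = (S : Set ℕ) + T := by
  ext x
  simp only [SetLike.mem_coe, AddSubmonoid.mem_sup, Set.mem_add]

lemma exists_consecutive (A : Set ℕ) (h1 : ∀ e : ℕ, (∀ a ∈ A, e ∣ a) → e ∣ 1) :
    ∃ q : ℕ, q ∈ AddSubmonoid.closure A ∧ q + 1 ∈ AddSubmonoid.closure A := by
  set H : AddSubgroup ℤ := AddSubgroup.closure ((fun a : ℕ => (a : ℤ)) '' A) with hH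
  obtain ⟨g, hg⟩ := Int.subgroup_cyclic H
  have hgdvd : ∀ a ∈ A, g ∣ (a : ℤ) := by
    intro a ha
    have : (a : ℤ) ∈ H := AddSubgroup.subset_closure ⟨a, ha, rfl⟩
    rw [hg, AddSubgroup.mem_closure_singleton] at this
    obtain ⟨n, hn⟩ := this
    exact ⟨n, by rw [← hn]; simp [zsmul_eq_mul, mul_comm]⟩
  have hnat : g.natAbs ∣ 1 := h1 g.natAbs (fun a ha => by
    have := Int.natAbs_dvd_natAbs.mpr (hgdvd a ha)
    simpa using this)
  have h1H : (1 : ℤ) ∈ H := by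
    rw [hg, AddSubgroup.mem_closure_singleton]
    have hg1 : g ∣ 1 := Int.natAbs_dvd.mp (by exact_mod_cast hnat)
    obtain ⟨n, hn⟩ := hg1
    exact ⟨n, by rw [hn]; simp [zsmul_eq_mul, mul_comm]⟩
  set D : AddSubgroup ℤ :=
  { carrier := {z : ℤ | ∃ x ∈ AddSubmonoid.closure A, ∃ y ∈ AddSubmonoid.closure A, z = (x : ℤ) - y}
    zero_mem' := ⟨0, AddSubmonoid.zero_mem _, 0, AddSubmonoid.zero_mem _, by ring⟩
    add_mem' := by
      rintro z w ⟨x, hx, y, hy, rfl⟩ ⟨x', hx', y', hy', rfl⟩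
      exact ⟨x + x', AddSubmonoid.add_mem _ hx hx', y + y', AddSubmonoid.add_mem _ hy hy', by push_cast; ring⟩
    neg_mem' := by
      rintro z ⟨x, hx, y, hy, rfl⟩
      exact ⟨y, hy, x, hx, by ring⟩ } with hD
  have hHD : H ≤ D := by
    rw [hH]
    apply (AddSubgroup.closure_le D).mpr
    rintro z ⟨a, ha, rfl⟩
    exact ⟨a, AddSubmonoid.subset_closure ha, 0, AddSubmonoid.zero_mem _, by push_cast; ring⟩
  obtain ⟨x, hx, y, hy, hxy⟩ := hHD h1H
  have hxy' : x = y + 1 := by omega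
  exact ⟨y, hy, hxy' ▸ hx⟩

lemma all_ge_mem (M : AddSubmonoid ℕ) (q : ℕ) (hq : q ∈ M) (hq1 : q + 1 ∈ M) :
    ∀ n : ℕ, q * q ≤ n → n ∈ M := by
  intro n hn
  rcases Nat.eq_zero_or_pos q with rfl | hqpos
  · have h1M : (1 : ℕ) ∈ M := by simpa using hq1
    simpa using M.nsmul_mem h1M n
  · have hrq : n % q < q := Nat.mod_lt _ hqpos
    have haq : q ≤ n / q := (Nat.le_div_iff_mul_le hqpos).mpr (by nlinarith)
    obtain ⟨k, hk⟩ := Nat.le.dest (le_of_lt (lt_of_lt_of_le hrq haq))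
    have hid : n = (n % q) * (q + 1) + k * q := by
      conv_lhs => rw [← Nat.div_add_mod n q, ← hk]
      ring
    rw [hid]
    refine M.add_mem ?_ ?_
    · simpa [smul_eq_mul] using M.nsmul_mem hq1 (n % q)
    · simpa [smul_eq_mul] using M.nsmul_mem hq k


lemma dvd_one_of_setGcd_eq_one {A : Set ℕ} (hA : setGcd A = 1) :
    ∀ e : ℕ, (∀ a ∈ A, e ∣ a) → e ∣ 1 := by
  have hne : {d : ℕ | (∀ a ∈ A, d ∣ a) ∧ ∀ e : ℕ, (∀ a ∈ A, e ∣ a) → e ∣ d}.Nonempty := by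
    by_contra hcon
    rw [Set.not_nonempty_iff_eq_empty] at hcon
    unfold setGcd at hA
    rw [hcon, Nat.sInf_empty] at hA
    exact absurd hA.symm one_ne_zero
  have hmem := Nat.sInf_mem hne
  unfold setGcd at hA
  rw [hA] at hmem
  exact hmem.2

lemma setGcd_eq_one {A : Set ℕ} (hdvd : ∀ e : ℕ, (∀ a ∈ A, e ∣ a) → e ∣ 1)
    (hx : ∃ x ∈ A, x ≠ 0) : setGcd A = 1 := by
  have h1 : 1 ∈ {d : ℕ | (∀ a ∈ A, d ∣ a) ∧ ∀ e : ℕ, (∀ a ∈ A, e ∣ a) → e ∣ d} :=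
    ⟨fun a _ => one_dvd a, hdvd⟩
  have hle : sInf {d : ℕ | (∀ a ∈ A, d ∣ a) ∧ ∀ e : ℕ, (∀ a ∈ A, e ∣ a) → e ∣ d} ≤ 1 :=
    Nat.sInf_le h1
  have hne0 : sInf {d : ℕ | (∀ a ∈ A, d ∣ a) ∧ ∀ e : ℕ, (∀ a ∈ A, e ∣ a) → e ∣ d} ≠ 0 := by
    intro h0
    have hm := Nat.sInf_mem ⟨1, h1⟩
    rw [h0] at hm
    obtain ⟨x, hxA, hx0⟩ := hx
    exact hx0 (Nat.eq_zero_of_zero_dvd (hm.1 x hxA))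
  unfold setGcd
  omega

/-- If `σ' < σ` are consecutive right generators of `Λ ≠ ℕ` with `σ' ≠ c(Λ)`, and
`ω(Λ \ {σ'}) = 1`, then `ω(Λ \ {σ}) = 1`,
`shrink(Λ \ {σ}) = shrink(Λ \ {σ'}) + Λ_{{σ',…,σ-1}}`, and
`c(shrink(Λ \ {σ})) ≤ c(shrink(Λ \ {σ'}))`. -/
theorem stmt13 (Λ : Set ℕ) (h : IsNumSgp Λ) (hne : Λ ≠ Set.univ)
    (σ' σ : ℕ) (hσ' : IsRightGen Λ σ') (hσ : IsRightGen Λ σ) (hlt : σ' < σ)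
    (hconsec : ∀ τ : ℕ, IsRightGen Λ τ → τ ≤ σ' ∨ σ ≤ τ)
    (hne' : σ' ≠ conductor Λ)
    (hω : omega' (Λ \ {σ'}) = 1) :
    omega' (Λ \ {σ}) = 1 ∧
    shrink (Λ \ {σ}) = shrink (Λ \ {σ'}) + intervalSgp σ' (σ - 1) ∧
    conductor (shrink (Λ \ {σ})) ≤ conductor (shrink (Λ \ {σ'})) := by
  obtain ⟨⟨hσ'pos, hσ'mem, -⟩, hσ'frob⟩ := hσ'
  obtain ⟨⟨hσpos, hσmem, -⟩, hσfrob⟩ := hσ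
  have hbdd : BddAbove Λᶜ := h.cofinite.bddAbove
  have hgap : ∀ x, x ∉ Λ → x ≤ frob Λ := fun x hx => le_csSup hbdd hx
  have hbig : ∀ x, frob Λ < x → x ∈ Λ := by
    intro x hx; by_contra hc; exact absurd (hgap x hc) (not_le.mpr hx)
  have hfrobdel : ∀ t, frob Λ < t → frob (Λ \ {t}) = t := by
    intro t ht
    have hcompl : (Λ \ {t})ᶜ = Λᶜ ∪ {t} := by
      ext x
      simp only [Set.mem_compl_iff, Set.mem_diff, Set.mem_union, Set.mem_singleton_iff]
      tauto
    show sSup (Λ \ {t})ᶜ = t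
    rw [hcompl]
    apply le_antisymm
    · apply csSup_le ⟨t, Or.inr rfl⟩
      rintro x (hx | rfl)
      · exact le_of_lt (lt_of_le_of_lt (hgap x hx) ht)
      · exact le_refl _
    · exact le_csSup ((h.cofinite.union (Set.finite_singleton t)).bddAbove) (Or.inr rfl)
  have hLdel : ∀ t, frob Λ < t → leftEls (Λ \ {t}) = {x | x ∈ Λ ∧ x < t} := by
    intro t ht
    ext x
    simp only [leftEls, Set.mem_setOf_eq, Set.mem_diff, Set.mem_singleton_iff, hfrobdel t ht]
    constructor
    · rintro ⟨⟨h1, _⟩, h3⟩; exact ⟨h1, h3⟩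
    · rintro ⟨h1, h2⟩; exact ⟨⟨h1, by omega⟩, h2⟩
  have hL' := hLdel σ' hσ'frob
  have hLσ := hLdel σ hσfrob
  have hLunion : {x | x ∈ Λ ∧ x < σ} = {x | x ∈ Λ ∧ x < σ'} ∪ Set.Icc σ' (σ - 1) := by
    ext x
    simp only [Set.mem_setOf_eq, Set.mem_union, Set.mem_Icc]
    constructor
    · rintro ⟨hx, hxσ⟩
      by_cases hx' : x < σ'
      · exact Or.inl ⟨hx, hx'⟩
      · exact Or.inr ⟨by omega, by omega⟩
    · rintro (⟨hx, hxlt⟩ | ⟨h1, h2⟩)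
      · exact ⟨hx, hxlt.trans hlt⟩
      · exact ⟨hbig x (lt_of_lt_of_le hσ'frob h1), by omega⟩
  have hdvd1 : ∀ e : ℕ, (∀ a ∈ leftEls (Λ \ {σ'}), e ∣ a) → e ∣ 1 :=
    dvd_one_of_setGcd_eq_one hω
  have hsub : leftEls (Λ \ {σ'}) ⊆ leftEls (Λ \ {σ}) := by
    rw [hL', hLσ]
    rintro x ⟨h1, h2⟩
    exact ⟨h1, by omega⟩
  have hω1 : omega' (Λ \ {σ}) = 1 :=
    setGcd_eq_one (fun e he => hdvd1 e (fun a ha => he a (hsub ha)))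
      ⟨σ', by rw [hLσ]; exact ⟨hσ'mem, hlt⟩, by omega⟩
  have hshr : ∀ t : ℕ, omega' (Λ \ {t}) = 1 →
      shrink (Λ \ {t}) = (AddSubmonoid.closure (leftEls (Λ \ {t})) : Set ℕ) := by
    intro t ht
    unfold shrink
    rw [ht]
    simp only [Nat.div_one, Set.image_id']
  refine ⟨hω1, ?_, ?_⟩
  · rw [hshr σ hω1, hshr σ' hω, hLσ, hLunion, AddSubmonoid.closure_union, coe_sup_eq, hL']
    rfl
  · have hsub2 : shrink (Λ \ {σ'}) ⊆ shrink (Λ \ {σ}) := by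
      rw [hshr σ hω1, hshr σ' hω]
      intro x hx
      exact AddSubmonoid.closure_mono hsub hx
    obtain ⟨q, hq, hq1⟩ := exists_consecutive (leftEls (Λ \ {σ'})) hdvd1
    have hbound : ∀ n, q * q ≤ n → n ∈ shrink (Λ \ {σ'}) := by
      intro n hn
      rw [hshr σ' hω]
      exact all_ge_mem _ q hq hq1 n hn
    unfold conductor
    by_cases hc : (shrink (Λ \ {σ}))ᶜ = ∅
    · simp [hc]
    · have hc' : (shrink (Λ \ {σ'}))ᶜ ≠ ∅ := by
        intro h0
        apply hc
        rw [Set.eq_empty_iff_forall_notMem] at h0 ⊢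
        intro x hx
        have : x ∈ shrink (Λ \ {σ'}) := by
          by_contra hxc
          exact h0 x hxc
        exact hx (hsub2 this)
      rw [if_neg hc, if_neg hc']
      have hbdd' : BddAbove (shrink (Λ \ {σ'}))ᶜ := by
        refine ⟨q * q, fun x hx => ?_⟩
        by_contra hxq
        exact hx (hbound x (by omega))
      have hle : frob (shrink (Λ \ {σ})) ≤ frob (shrink (Λ \ {σ'})) := by
        apply csSup_le_csSup hbdd'
        · exact Set.nonempty_iff_ne_empty.mpr hc
        · intro x hx
          exact fun hxm => hx (hsub2 hxm)
      omega



end NumSgpPaper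
end

section
/- Let m, u be integers with 2 ≤ u ≤ m. The pseudo-ordinary semigroup P_{m,u} has exactly m − 1 children, and the number of its grandchildren equals C(m−1, 2) + u if 2u ≤ m, and C(m−1, 2) + u − 1 otherwise. -/
open Pointwise

namespace NumSgpPaper

/-! ### Auxiliary lemmas for `stmt16` -/

lemma memP' {m u x : ℕ} : x ∈ P m u ↔ x = 0 ∨ x = m ∨ m + u ≤ x := by
  simp [P, Set.mem_union, Set.mem_insert_iff]; tauto

lemma frob_P' (m u : ℕ) (h2 : 2 ≤ u) (hum : u ≤ m) : frob (P m u) = m + u - 1 := by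
  have hmem : m + u - 1 ∈ (P m u)ᶜ := by
    simp only [Set.mem_compl_iff, memP']; omega
  have hub : ∀ x ∈ (P m u)ᶜ, x ≤ m + u - 1 := by
    intro x hx
    simp only [Set.mem_compl_iff, memP'] at hx; omega
  exact le_antisymm (csSup_le ⟨_, hmem⟩ hub) (le_csSup ⟨_, fun x hx => hub x hx⟩ hmem)

lemma frob_child' (m u σ : ℕ) (hσ : m + u ≤ σ) :
    frob (P m u \ {σ}) = σ := by
  have hmem : σ ∈ (P m u \ {σ})ᶜ := by
    simp [Set.mem_compl_iff, Set.mem_diff]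
  have hub : ∀ x ∈ (P m u \ {σ})ᶜ, x ≤ σ := by
    intro x hx
    simp only [Set.mem_compl_iff, Set.mem_diff, Set.mem_singleton_iff, not_and, not_not] at hx
    by_cases h : x ∈ P m u
    · exact (hx h).le
    · simp only [memP', not_or, not_le] at h; omega
  exact le_antisymm (csSup_le ⟨_, hmem⟩ hub) (le_csSup ⟨_, fun x hx => hub x hx⟩ hmem)

lemma rightGen_iff' (m u σ : ℕ) (h2 : 2 ≤ u) (hum : u ≤ m) :
    IsRightGen (P m u) σ ↔ m + u ≤ σ ∧ σ < 2*m + u ∧ σ ≠ 2*m := by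
  rw [IsRightGen, frob_P' m u h2 hum, IsMinGen]
  constructor
  · rintro ⟨⟨hpos, hmem, hnd⟩, hgt⟩
    rw [memP'] at hmem
    have h1 : m + u ≤ σ := by omega
    refine ⟨h1, ?_, ?_⟩
    · by_contra h
      exact hnd ⟨m, σ - m, by omega, by omega, memP'.2 (Or.inr (Or.inl rfl)),
        memP'.2 (Or.inr (Or.inr (by omega))), by omega⟩
    · rintro rfl
      exact hnd ⟨m, m, by omega, by omega, memP'.2 (Or.inr (Or.inl rfl)),
        memP'.2 (Or.inr (Or.inl rfl)), by omega⟩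
  · rintro ⟨h1, h2', h3⟩
    refine ⟨⟨by omega, memP'.2 (Or.inr (Or.inr h1)), ?_⟩, by omega⟩
    rintro ⟨a, b, ha, hb, haS, hbS, hab⟩
    rw [memP'] at haS hbS
    omega

lemma memPd' {m u σ x : ℕ} : x ∈ P m u \ {σ} ↔ (x = 0 ∨ x = m ∨ m + u ≤ x) ∧ x ≠ σ := by
  simp [Set.mem_diff, memP']

lemma rightGen_child_iff' (m u σ τ : ℕ) (h2 : 2 ≤ u) (hum : u ≤ m)
    (hσ1 : m + u ≤ σ) (hσ2 : σ < 2*m + u) (hσ3 : σ ≠ 2*m) :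
    IsRightGen (P m u \ {σ}) τ ↔
      (σ < τ ∧ τ < 2*m + u ∧ τ ≠ 2*m) ∨ (τ = m + σ ∧ σ < m + 2*u) := by
  rw [IsRightGen, frob_child' m u σ hσ1, IsMinGen]
  constructor
  · rintro ⟨⟨hpos, hmem, hnd⟩, hgt⟩
    rw [memPd'] at hmem
    obtain ⟨hm, hne⟩ := hmem
    by_cases hlt : τ < 2*m + u
    · left
      refine ⟨hgt, hlt, ?_⟩
      rintro rfl
      exact hnd ⟨m, m, by omega, by omega, memPd'.2 ⟨Or.inr (Or.inl rfl), by omega⟩,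
        memPd'.2 ⟨Or.inr (Or.inl rfl), by omega⟩, by omega⟩
    · right
      push_neg at hlt
      have hτσ : τ = m + σ := by
        by_contra hne2
        exact hnd ⟨m, τ - m, by omega, by omega, memPd'.2 ⟨Or.inr (Or.inl rfl), by omega⟩,
          memPd'.2 ⟨Or.inr (Or.inr (by omega)), by omega⟩, by omega⟩
      refine ⟨hτσ, ?_⟩
      by_contra h
      push_neg at h
      exact hnd ⟨m + u, σ - u, by omega, by omega,
        memPd'.2 ⟨Or.inr (Or.inr le_rfl), by omega⟩,
        memPd'.2 ⟨Or.inr (Or.inr (by omega)), by omega⟩, by omega⟩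
  · rintro (⟨h1, h2', h3⟩ | ⟨rfl, hlt⟩)
    · refine ⟨⟨by omega, memPd'.2 ⟨Or.inr (Or.inr (by omega)), by omega⟩, ?_⟩, h1⟩
      rintro ⟨a, b, ha, hb, haS, hbS, hab⟩
      rw [memPd'] at haS hbS
      omega
    · refine ⟨⟨by omega, memPd'.2 ⟨Or.inr (Or.inr (by omega)), by omega⟩, ?_⟩, by omega⟩
      rintro ⟨a, b, ha, hb, haS, hbS, hab⟩
      rw [memPd'] at haS hbS
      omega

lemma card_lt_pairs' (s : Finset ℕ) :
    ((s ×ˢ s).filter fun p => p.1 < p.2).card = s.card.choose 2 := by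
  rw [← Finset.card_powersetCard 2 s]
  apply Finset.card_bij (fun p _ => ({p.1, p.2} : Finset ℕ))
  · intro p hp
    simp only [Finset.mem_filter, Finset.mem_product] at hp
    rw [Finset.mem_powersetCard]
    refine ⟨?_, Finset.card_pair (by omega)⟩
    intro x hx
    simp only [Finset.mem_insert, Finset.mem_singleton] at hx
    rcases hx with rfl | rfl
    exacts [hp.1.1, hp.1.2]
  · intro p hp q hq h
    simp only [Finset.mem_filter, Finset.mem_product] at hp hq
    have h1 : p.1 ∈ ({q.1, q.2} : Finset ℕ) := h ▸ (by simp)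
    have h2 : p.2 ∈ ({q.1, q.2} : Finset ℕ) := h ▸ (by simp)
    have h3 : q.1 ∈ ({p.1, p.2} : Finset ℕ) := h ▸ (by simp)
    have h4 : q.2 ∈ ({p.1, p.2} : Finset ℕ) := h ▸ (by simp)
    simp only [Finset.mem_insert, Finset.mem_singleton] at h1 h2 h3 h4
    have := hp.2; have := hq.2
    ext <;> omega
  · intro t ht
    rw [Finset.mem_powersetCard] at ht
    obtain ⟨a, b, hab, rfl⟩ := Finset.card_eq_two.1 ht.2
    rcases lt_or_gt_of_ne hab with h | h
    · exact ⟨(a, b), by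
        simp only [Finset.mem_filter, Finset.mem_product]
        exact ⟨⟨ht.1 (by simp), ht.1 (by simp)⟩, h⟩, rfl⟩
    · exact ⟨(b, a), by
        simp only [Finset.mem_filter, Finset.mem_product]
        exact ⟨⟨ht.1 (by simp), ht.1 (by simp)⟩, h⟩, by
          rw [Finset.pair_comm]⟩

/-- The finset of right generators of `P m u`. -/
def Rfin (m u : ℕ) : Finset ℕ := (Finset.Icc (m+u) (2*m+u-1)).erase (2*m)

lemma mem_Rfin {m u σ : ℕ} (h2 : 2 ≤ u) (hum : u ≤ m) :
    σ ∈ Rfin m u ↔ m + u ≤ σ ∧ σ < 2*m + u ∧ σ ≠ 2*m := by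
  simp only [Rfin, Finset.mem_erase, Finset.mem_Icc]
  omega

lemma card_Rfin {m u : ℕ} (h2 : 2 ≤ u) (hum : u ≤ m) : (Rfin m u).card = m - 1 := by
  rw [Rfin, Finset.card_erase_of_mem (by rw [Finset.mem_Icc]; omega), Nat.card_Icc]
  omega

/-- The finset of pairs giving grandchildren of `P m u`. -/
def Ffin (m u : ℕ) : Finset (ℕ × ℕ) :=
  ((Rfin m u ×ˢ Rfin m u).filter fun p => p.1 < p.2) ∪
    ((Rfin m u).filter (· < m + 2*u)).image fun σ => (σ, m + σ)

lemma mem_Ffin {m u : ℕ} (h2 : 2 ≤ u) (hum : u ≤ m) (p : ℕ × ℕ) :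
    p ∈ Ffin m u ↔ (m + u ≤ p.1 ∧ p.1 < 2*m + u ∧ p.1 ≠ 2*m) ∧
      ((p.1 < p.2 ∧ p.2 < 2*m + u ∧ p.2 ≠ 2*m) ∨ (p.2 = m + p.1 ∧ p.1 < m + 2*u)) := by
  obtain ⟨x, y⟩ := p
  simp only [Ffin, Finset.mem_union, Finset.mem_filter, Finset.mem_product,
    Finset.mem_image, mem_Rfin h2 hum, Prod.mk.injEq]
  constructor
  · rintro (⟨⟨hx, hy⟩, hlt⟩ | ⟨a, ⟨ha, hlt⟩, rfl, rfl⟩)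
    · exact ⟨hx, Or.inl ⟨hlt, hy.2.1, hy.2.2⟩⟩
    · exact ⟨ha, Or.inr ⟨rfl, hlt⟩⟩
  · rintro ⟨hx, (⟨h1, h2', h3⟩ | ⟨rfl, hlt⟩)⟩
    · exact Or.inl ⟨⟨hx, by omega, h2', h3⟩, h1⟩
    · exact Or.inr ⟨x, ⟨hx, hlt⟩, rfl, rfl⟩

lemma card_Ffin {m u : ℕ} (h2 : 2 ≤ u) (hum : u ≤ m) :
    (Ffin m u).card = (m-1).choose 2 + (if 2*u ≤ m then u else u - 1) := by
  rw [Ffin, Finset.card_union_of_disjoint, card_lt_pairs', card_Rfin h2 hum]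
  · congr 1
    rw [Finset.card_image_of_injective _ (fun a b h => (Prod.ext_iff.1 h).1)]
    have hfe : (Rfin m u).filter (· < m + 2*u) = (Finset.Icc (m+u) (m+2*u-1)).erase (2*m) := by
      ext x
      simp only [Finset.mem_filter, mem_Rfin h2 hum, Finset.mem_erase, Finset.mem_Icc,
        decide_eq_true_eq]
      omega
    rw [hfe]
    by_cases hcase : 2*u ≤ m
    · rw [Finset.erase_eq_of_notMem (by rw [Finset.mem_Icc]; omega), Nat.card_Icc, if_pos hcase]
      omega
    · rw [Finset.card_erase_of_mem (by rw [Finset.mem_Icc]; omega), Nat.card_Icc, if_neg hcase]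
      omega
  · rw [Finset.disjoint_left]
    rintro p hp hp2
    simp only [Finset.mem_filter, Finset.mem_product, mem_Rfin h2 hum] at hp
    simp only [Finset.mem_image, Finset.mem_filter, mem_Rfin h2 hum] at hp2
    obtain ⟨a, ⟨ha, hlt⟩, heq⟩ := hp2
    have := (Prod.ext_iff.1 heq).1
    have := (Prod.ext_iff.1 heq).2
    omega

lemma pair_diff_eq {m u : ℕ} (σ τ : ℕ) :
    (P m u \ {σ}) \ {τ} = P m u \ {σ, τ} := by
  rw [Set.diff_diff, Set.singleton_union]

/-- `P_{m,u}` has exactly `m - 1` children, and its number of grandchildren is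
`C(m-1,2) + u` if `2u ≤ m` and `C(m-1,2) + u - 1` otherwise. -/
theorem stmt16 (m u : ℕ) (h2 : 2 ≤ u) (hum : u ≤ m) :
    {Λ : Set ℕ | ∃ σ : ℕ, IsRightGen (P m u) σ ∧ Λ = P m u \ {σ}}.ncard = m - 1 ∧
    {Λ : Set ℕ | ∃ σ τ : ℕ, IsRightGen (P m u) σ ∧ IsRightGen (P m u \ {σ}) τ ∧
        Λ = (P m u \ {σ}) \ {τ}}.ncard =
      if 2 * u ≤ m then (m - 1).choose 2 + u else (m - 1).choose 2 + u - 1 := by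
  have hch : {Λ : Set ℕ | ∃ σ : ℕ, IsRightGen (P m u) σ ∧ Λ = P m u \ {σ}} =
      (fun σ => P m u \ {σ}) '' ↑(Rfin m u) := by
    ext Λ
    simp only [Set.mem_setOf_eq, Set.mem_image, Finset.mem_coe]
    constructor
    · rintro ⟨σ, hσ, rfl⟩
      exact ⟨σ, (mem_Rfin h2 hum).2 ((rightGen_iff' m u σ h2 hum).1 hσ), rfl⟩
    · rintro ⟨σ, hσ, rfl⟩
      exact ⟨σ, (rightGen_iff' m u σ h2 hum).2 ((mem_Rfin h2 hum).1 hσ), rfl⟩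
  have hgc : {Λ : Set ℕ | ∃ σ τ : ℕ, IsRightGen (P m u) σ ∧ IsRightGen (P m u \ {σ}) τ ∧
      Λ = (P m u \ {σ}) \ {τ}} = (fun p : ℕ × ℕ => P m u \ {p.1, p.2}) '' ↑(Ffin m u) := by
    ext Λ
    simp only [Set.mem_setOf_eq, Set.mem_image, Finset.mem_coe]
    constructor
    · rintro ⟨σ, τ, hσ, hτ, rfl⟩
      rw [rightGen_iff' m u σ h2 hum] at hσ
      rw [rightGen_child_iff' m u σ τ h2 hum hσ.1 hσ.2.1 hσ.2.2] at hτ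
      exact ⟨(σ, τ), (mem_Ffin h2 hum _).2 ⟨hσ, hτ⟩, (pair_diff_eq σ τ).symm⟩
    · rintro ⟨p, hp, rfl⟩
      rw [mem_Ffin h2 hum] at hp
      exact ⟨p.1, p.2, (rightGen_iff' m u p.1 h2 hum).2 hp.1,
        (rightGen_child_iff' m u p.1 p.2 h2 hum hp.1.1 hp.1.2.1 hp.1.2.2).2 hp.2,
        (pair_diff_eq p.1 p.2).symm⟩
  constructor
  · rw [hch, Set.ncard_image_of_injOn, Set.ncard_coe_finset, card_Rfin h2 hum]
    intro a ha b hb hab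
    have hab' : P m u \ {a} = P m u \ {b} := hab
    simp only [Finset.coe_sort_coe, Finset.mem_coe, mem_Rfin h2 hum] at ha hb
    have h1 : a ∉ P m u \ {b} := hab' ▸ (by simp)
    rw [Set.mem_diff, Set.mem_singleton_iff] at h1
    push_neg at h1
    exact h1 (memP'.2 (Or.inr (Or.inr (by omega))))
  · rw [hgc, Set.ncard_image_of_injOn, Set.ncard_coe_finset, card_Ffin h2 hum]
    · split_ifs with hcase
      · rfl
      · omega
    · intro p hp q hq hpq
      simp only [Finset.coe_sort_coe, Finset.mem_coe] at hp hq
      rw [mem_Ffin h2 hum] at hp hq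
      have hpq' : P m u \ ({p.1, p.2} : Set ℕ) = P m u \ {q.1, q.2} := hpq
      have hpord : p.1 < p.2 ∧ m + u ≤ p.1 ∧ m + u ≤ p.2 := by
        rcases hp with ⟨h1, h2' | h2'⟩ <;> omega
      have hqord : q.1 < q.2 ∧ m + u ≤ q.1 ∧ m + u ≤ q.2 := by
        rcases hq with ⟨h1, h2' | h2'⟩ <;> omega
      have key : ∀ x y : ℕ, m + u ≤ x → x ∉ P m u \ ({y, x} : Set ℕ) := by
        intro x y hx
        simp [Set.mem_diff]
      have e1 : p.1 = q.1 ∨ p.1 = q.2 := by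
        have hn : p.1 ∉ P m u \ ({q.1, q.2} : Set ℕ) := by
          rw [← hpq']; simp [Set.mem_diff]
        rw [Set.mem_diff] at hn
        push_neg at hn
        simpa using hn (memP'.2 (Or.inr (Or.inr (by omega))))
      have e2 : p.2 = q.1 ∨ p.2 = q.2 := by
        have hn : p.2 ∉ P m u \ ({q.1, q.2} : Set ℕ) := by
          rw [← hpq']; simp [Set.mem_diff]
        rw [Set.mem_diff] at hn
        push_neg at hn
        simpa using hn (memP'.2 (Or.inr (Or.inr (by omega))))
      have e3 : q.1 = p.1 ∨ q.1 = p.2 := by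
        have hn : q.1 ∉ P m u \ ({p.1, p.2} : Set ℕ) := by
          rw [hpq']; simp [Set.mem_diff]
        rw [Set.mem_diff] at hn
        push_neg at hn
        simpa using hn (memP'.2 (Or.inr (Or.inr (by omega))))
      exact Prod.ext_iff.2 ⟨by omega, by omega⟩


end NumSgpPaper
end

section
/- For every integer γ ≥ 2, there is exactly one numerical semigroup of genus γ and multiplicity 2, and the number of numerical semigroups of genus γ and multiplicity 3 equals γ − ⌊(2γ−1)/3⌋. -/
open Pointwise

namespace NumSgpPaper

/-! ### Auxiliary material for `stmt17` -/

/-- The unique numerical semigroup of multiplicity 2 with gap parameter `x`. -/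
def T2g (x : ℕ) : Set ℕ := {n | n % 2 = 0 ∨ (n % 2 = 1 ∧ 2 * x + 1 ≤ n)}

/-- The numerical semigroups of multiplicity 3, parametrized. -/
def T3g (x y : ℕ) : Set ℕ :=
  {n | n % 3 = 0 ∨ (n % 3 = 1 ∧ 3 * x + 1 ≤ n) ∨ (n % 3 = 2 ∧ 3 * y + 2 ≤ n)}

lemma count_res (m r q : ℕ) (hr : r < m) :
    {n : ℕ | n % m = r ∧ n < m * q + r}.ncard = q := by
  have hm : 0 < m := by omega
  have hset : {n : ℕ | n % m = r ∧ n < m * q + r}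
      = ↑((Finset.range q).image fun i => m * i + r) := by
    ext n
    simp only [Set.mem_setOf_eq, Finset.coe_image, Set.mem_image, Finset.mem_coe,
      Finset.mem_range]
    constructor
    · rintro ⟨h1, h2⟩
      have h3 : m * (n / m) + r = n := by rw [← h1]; exact Nat.div_add_mod n m
      have h4 : m * (n / m) < m * q := by omega
      exact ⟨n / m, Nat.lt_of_mul_lt_mul_left h4, h3⟩
    · rintro ⟨i, hi, rfl⟩
      have h5 : m * i < m * q := mul_lt_mul_of_pos_left hi hm
      constructor
      · simp [Nat.mul_add_mod, Nat.mod_eq_of_lt hr]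
      · omega
  rw [hset, Set.ncard_coe_finset,
    Finset.card_image_of_injOn (fun i _ j _ hij => by
      have : m * i = m * j := by omega
      exact Nat.eq_of_mul_eq_mul_left hm this),
    Finset.card_range]

lemma exists_ge_mem (Λ : Set ℕ) (h : Λᶜ.Finite) : ∃ N : ℕ, ∀ n, N ≤ n → n ∈ Λ := by
  obtain ⟨N, hN⟩ := h.bddAbove
  refine ⟨N + 1, fun n hn => ?_⟩
  by_contra hc
  exact absurd (hN hc) (by omega)

lemma mult_spec (Λ : Set ℕ) (h : Λᶜ.Finite) :
    mult Λ ∈ Λ ∧ 0 < mult Λ ∧ ∀ n, 0 < n → n ∈ Λ → mult Λ ≤ n := by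
  obtain ⟨N, hN⟩ := exists_ge_mem Λ h
  have hne : {n : ℕ | n ∈ Λ ∧ 0 < n}.Nonempty := ⟨N + 1, hN _ (by omega), by omega⟩
  have hmem := Nat.sInf_mem hne
  exact ⟨hmem.1, hmem.2, fun n h1 h2 => Nat.sInf_le ⟨h2, h1⟩⟩

lemma mult_eq_of (Λ : Set ℕ) (h : Λᶜ.Finite) (m : ℕ) (hm : m ∈ Λ)
    (h0 : 0 < m) (hlt : ∀ n, 0 < n → n < m → n ∉ Λ) : mult Λ = m := by
  obtain ⟨h1, h2, h3⟩ := mult_spec Λ h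
  have := h3 m h0 hm
  rcases Nat.lt_or_ge (mult Λ) m with hc | hc
  · exact absurd h1 (hlt _ h2 hc)
  · omega

lemma mul_mem (Λ : Set ℕ) (h : IsNumSgp Λ) (m : ℕ) (hm : m ∈ Λ) :
    ∀ k, m * k ∈ Λ := by
  intro k
  induction k with
  | zero => simpa using h.zero_mem
  | succ k ih =>
    have := h.add_mem ih hm
    have heq : m * (k + 1) = m * k + m := by ring
    rwa [heq]

lemma genus_T2g (x : ℕ) : genus (T2g x) = x := by
  have hc : (T2g x)ᶜ = {n : ℕ | n % 2 = 1 ∧ n < 2 * x + 1} := by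
    ext n
    simp only [T2g, Set.mem_compl_iff, Set.mem_setOf_eq]
    omega
  rw [genus, hc, count_res 2 1 x (by norm_num)]

lemma genus_T3g (x y : ℕ) : genus (T3g x y) = x + y := by
  have hc : (T3g x y)ᶜ =
      {n : ℕ | n % 3 = 1 ∧ n < 3 * x + 1} ∪ {n : ℕ | n % 3 = 2 ∧ n < 3 * y + 2} := by
    ext n
    simp only [T3g, Set.mem_compl_iff, Set.mem_setOf_eq, Set.mem_union]
    omega
  rw [genus, hc, Set.ncard_union_eq
      (Set.disjoint_left.2 (by rintro n ⟨h1, _⟩ ⟨h2, _⟩; omega))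
      ((Set.finite_Iio (3 * x + 1)).subset (by rintro n ⟨_, h⟩; exact h))
      ((Set.finite_Iio (3 * y + 2)).subset (by rintro n ⟨_, h⟩; exact h)),
    count_res 3 1 x (by norm_num), count_res 3 2 y (by norm_num)]

lemma numsgp_T2g (x : ℕ) : IsNumSgp (T2g x) := by
  refine ⟨?_, ?_, ?_⟩
  · simp [T2g]
  · intro a b ha hb
    simp only [T2g, Set.mem_setOf_eq] at ha hb ⊢
    omega
  · refine (Set.finite_Iio (2 * x + 1)).subset ?_
    intro n hn
    simp only [T2g, Set.mem_compl_iff, Set.mem_setOf_eq] at hn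
    simp only [Set.mem_Iio]
    omega

lemma numsgp_T3g (x y : ℕ) (h1 : y ≤ 2 * x) (h2 : x ≤ 2 * y + 1) :
    IsNumSgp (T3g x y) := by
  refine ⟨?_, ?_, ?_⟩
  · simp [T3g]
  · intro a b ha hb
    simp only [T3g, Set.mem_setOf_eq] at ha hb ⊢
    omega
  · refine (Set.finite_Iio (3 * x + 3 * y + 3)).subset ?_
    intro n hn
    simp only [T3g, Set.mem_compl_iff, Set.mem_setOf_eq] at hn
    simp only [Set.mem_Iio]
    omega

lemma mult_T2g (x : ℕ) (hx : 1 ≤ x) : mult (T2g x) = 2 := by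
  refine mult_eq_of _ (numsgp_T2g x).cofinite 2 (by simp [T2g]) (by norm_num) ?_
  intro n hn hn2
  simp only [T2g, Set.mem_setOf_eq]
  omega

lemma cofinite_T3g (x y : ℕ) : (T3g x y)ᶜ.Finite := by
  refine (Set.finite_Iio (3 * x + 3 * y + 3)).subset ?_
  intro n hn
  simp only [T3g, Set.mem_compl_iff, Set.mem_setOf_eq] at hn
  simp only [Set.mem_Iio]
  omega

lemma mult_T3g (x y : ℕ) (hx : 1 ≤ x) (hy : 1 ≤ y) : mult (T3g x y) = 3 := by
  refine mult_eq_of _ (cofinite_T3g x y) 3 ?_ (by norm_num) ?_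
  · simp [T3g]
  · intro n hn hn3
    simp only [T3g, Set.mem_setOf_eq]
    omega

lemma char2 (Λ : Set ℕ) (h : IsNumSgp Λ) (hmul : mult Λ = 2) :
    ∃ x : ℕ, 1 ≤ x ∧ Λ = T2g x := by
  obtain ⟨hmem, hpos, hle⟩ := mult_spec Λ h.cofinite
  rw [hmul] at hmem hle
  have h1 : 1 ∉ Λ := fun hc => by have := hle 1 (by norm_num) hc; omega
  obtain ⟨N, hN⟩ := exists_ge_mem Λ h.cofinite
  have hne1 : {n : ℕ | n ∈ Λ ∧ n % 2 = 1}.Nonempty :=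
    ⟨2 * N + 1, hN _ (by omega), by omega⟩
  set A1 := sInf {n : ℕ | n ∈ Λ ∧ n % 2 = 1} with hA1def
  have hA1 := Nat.sInf_mem hne1
  have hA1r : A1 % 2 = 1 := hA1.2
  have hmul2 : ∀ k, 2 * k ∈ Λ := mul_mem Λ h 2 hmem
  have key : ∀ n, n ∈ Λ ↔ (n % 2 = 0 ∨ (n % 2 = 1 ∧ A1 ≤ n)) := by
    intro n
    constructor
    · intro hn
      have h2n : n % 2 = 0 ∨ n % 2 = 1 := by omega
      rcases h2n with h0 | h1'
      · exact Or.inl h0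
      · exact Or.inr ⟨h1', Nat.sInf_le ⟨hn, h1'⟩⟩
    · rintro (h0 | ⟨hr, hr2⟩)
      · have := hmul2 (n / 2)
        have heq : 2 * (n / 2) = n := by omega
        rwa [heq] at this
      · have heq : n = A1 + 2 * ((n - A1) / 2) := by omega

        rw [heq]
        exact h.add_mem hA1.1 (hmul2 _)
  have hA1ne1 : A1 ≠ 1 := fun hc => h1 (hc ▸ hA1.1)
  have hA1ge : 3 ≤ A1 := by omega
  refine ⟨A1 / 2, by omega, ?_⟩
  ext n
  rw [key n]
  simp only [T2g, Set.mem_setOf_eq]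
  omega

lemma char3 (Λ : Set ℕ) (h : IsNumSgp Λ) (hmul : mult Λ = 3) :
    ∃ x y : ℕ, 1 ≤ x ∧ 1 ≤ y ∧ y ≤ 2 * x ∧ x ≤ 2 * y + 1 ∧ Λ = T3g x y := by
  obtain ⟨hmem, hpos, hle⟩ := mult_spec Λ h.cofinite
  rw [hmul] at hmem hle
  have h1 : 1 ∉ Λ := fun hc => by have := hle 1 (by norm_num) hc; omega
  have h2 : 2 ∉ Λ := fun hc => by have := hle 2 (by norm_num) hc; omega
  obtain ⟨N, hN⟩ := exists_ge_mem Λ h.cofinite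
  have hne1 : {n : ℕ | n ∈ Λ ∧ n % 3 = 1}.Nonempty :=
    ⟨3 * N + 1, hN _ (by omega), by omega⟩
  have hne2 : {n : ℕ | n ∈ Λ ∧ n % 3 = 2}.Nonempty :=
    ⟨3 * N + 2, hN _ (by omega), by omega⟩
  set A1 := sInf {n : ℕ | n ∈ Λ ∧ n % 3 = 1} with hA1def
  set A2 := sInf {n : ℕ | n ∈ Λ ∧ n % 3 = 2} with hA2def
  have hA1 := Nat.sInf_mem hne1
  have hA2 := Nat.sInf_mem hne2
  have hmul3 : ∀ k, 3 * k ∈ Λ := mul_mem Λ h 3 hmem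
  have key : ∀ n, n ∈ Λ ↔
      (n % 3 = 0 ∨ (n % 3 = 1 ∧ A1 ≤ n) ∨ (n % 3 = 2 ∧ A2 ≤ n)) := by
    intro n
    constructor
    · intro hn
      have h3n : n % 3 = 0 ∨ n % 3 = 1 ∨ n % 3 = 2 := by omega
      rcases h3n with h0 | h1' | h2'
      · exact Or.inl h0
      · exact Or.inr (Or.inl ⟨h1', Nat.sInf_le ⟨hn, h1'⟩⟩)
      · exact Or.inr (Or.inr ⟨h2', Nat.sInf_le ⟨hn, h2'⟩⟩)
    · rintro (h0 | ⟨hr, hr2⟩ | ⟨hr, hr2⟩)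
      · have := hmul3 (n / 3)
        have heq : 3 * (n / 3) = n := by omega
        rwa [heq] at this
      · have heq : n = A1 + 3 * ((n - A1) / 3) := by
          have := hA1.2
          omega
        rw [heq]; exact h.add_mem hA1.1 (hmul3 _)
      · have heq : n = A2 + 3 * ((n - A2) / 3) := by
          have := hA2.2
          omega
        rw [heq]; exact h.add_mem hA2.1 (hmul3 _)
  have hA1r : A1 % 3 = 1 := hA1.2
  have hA2r : A2 % 3 = 2 := hA2.2
  have hA1ne1 : A1 ≠ 1 := fun hc => h1 (hc ▸ hA1.1)
  have hA2ne2 : A2 ≠ 2 := fun hc => h2 (hc ▸ hA2.1)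
  have hA1ge : 4 ≤ A1 := by omega
  have hA2ge : 5 ≤ A2 := by omega
  -- closure constraints
  have hc1 : A2 ≤ A1 + A1 := by
    have hsum : A1 + A1 ∈ Λ := h.add_mem hA1.1 hA1.1
    have := (key (A1 + A1)).1 hsum
    omega
  have hc2 : A1 ≤ A2 + A2 := by
    have hsum : A2 + A2 ∈ Λ := h.add_mem hA2.1 hA2.1
    have := (key (A2 + A2)).1 hsum
    omega
  refine ⟨A1 / 3, A2 / 3, by omega, by omega, by omega, by omega, ?_⟩
  ext n
  rw [key n]
  simp only [T3g, Set.mem_setOf_eq]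
  omega

lemma T3g_inj (x y x' y' : ℕ) (h : T3g x y = T3g x' y') : x = x' := by
  have h1 : (3 * x + 1 : ℕ) ∈ T3g x y := by
    simp only [T3g, Set.mem_setOf_eq]; omega
  have h2 : (3 * x' + 1 : ℕ) ∈ T3g x' y' := by
    simp only [T3g, Set.mem_setOf_eq]; omega
  rw [h] at h1
  rw [← h] at h2
  simp only [T3g, Set.mem_setOf_eq] at h1 h2
  omega

/-- For `γ ≥ 2` there is exactly one numerical semigroup of genus `γ` and
multiplicity `2`, and there are `γ - ⌊(2γ-1)/3⌋` of genus `γ` and multiplicity `3`. -/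
theorem stmt17 (γ : ℕ) (hγ : 2 ≤ γ) :
    {Λ : Set ℕ | IsNumSgp Λ ∧ genus Λ = γ ∧ mult Λ = 2}.ncard = 1 ∧
    {Λ : Set ℕ | IsNumSgp Λ ∧ genus Λ = γ ∧ mult Λ = 3}.ncard
      = γ - (2 * γ - 1) / 3 := by
  classical
  constructor
  · -- multiplicity 2
    have hset : {Λ : Set ℕ | IsNumSgp Λ ∧ genus Λ = γ ∧ mult Λ = 2} = {T2g γ} := by
      ext Λ
      simp only [Set.mem_setOf_eq, Set.mem_singleton_iff]
      constructor
      · rintro ⟨h, hg, hm⟩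
        obtain ⟨x, hx, rfl⟩ := char2 Λ h hm
        rw [genus_T2g] at hg
        rw [hg]
      · rintro rfl
        exact ⟨numsgp_T2g γ, genus_T2g γ, mult_T2g γ (by omega)⟩
    rw [hset, Set.ncard_singleton]
  · -- multiplicity 3
    have hset : {Λ : Set ℕ | IsNumSgp Λ ∧ genus Λ = γ ∧ mult Λ = 3}
        = ↑((Finset.Icc ((γ + 2) / 3) ((2 * γ + 1) / 3)).image
            fun x => T3g x (γ - x)) := by
      ext Λ
      simp only [Set.mem_setOf_eq, Finset.coe_image, Set.mem_image, Finset.mem_coe,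
        Finset.mem_Icc]
      constructor
      · rintro ⟨h, hg, hm⟩
        obtain ⟨x, y, hx, hy, hc1, hc2, rfl⟩ := char3 Λ h hm
        rw [genus_T3g] at hg
        refine ⟨x, ⟨by omega, by omega⟩, ?_⟩
        rw [show γ - x = y by omega]
      · rintro ⟨x, ⟨hlo, hhi⟩, rfl⟩
        have hx : 1 ≤ x := by omega
        have hy : 1 ≤ γ - x := by omega
        exact ⟨numsgp_T3g x (γ - x) (by omega) (by omega),
          by rw [genus_T3g]; omega, mult_T3g x (γ - x) hx hy⟩
    rw [hset, Set.ncard_coe_finset,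
      Finset.card_image_of_injOn (fun a _ b _ hab => T3g_inj _ _ _ _ hab),
      Nat.card_Icc]
    obtain ⟨k, r, hr, rfl⟩ : ∃ k r, r < 3 ∧ γ = 3 * k + r :=
      ⟨γ / 3, γ % 3, by omega, by omega⟩
    interval_cases r <;> omega

end NumSgpPaper
end
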